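/- Let G be a connected graph obtained from connected graphs G_0 and G_1 by identifying a vertex of G_0 with a vertex of G_1 into a single common vertex u, and let G' be obtained from G_0 and a connected graph G_2 by identifying the same vertex of G_0 with a vertex of G_2 into the common vertex u. If |V(G_1)| = |V(G_2)| and |E(G_1)| = |E(G_2)|, then Σ_{e=w₁w₂ ∈ E(G_0)} m_{w₁}(e|G)·m_{w₂}(e|G) = Σ_{e=w₁w₂ ∈ E(G_0)} m_{w₁}(e|G')·m_{w₂}(e|G'), and Σ_{e=w₁w₂ ∈ E(G_0)} [n_{w₁}(e|G)·m_{w₂}(e|G) + n_{w₂}(e|G)·m_{w₁}(e|G)] = Σ_{e=w₁w₂ ∈ E(G_0)} [n_{w₁}(e|G')·m_{w₂}(e|G') + n_{w₂}(e|G')·m_{w₁}(e|G')]. -/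

import Mathlib

open SimpleGraph Finset
open scoped Classical

noncomputable section

variable {V : Type*}

/-- number of vertices strictly closer to `u` than to `v` -/
def szN (G : SimpleGraph V) (u v : V) : ℕ :=
  {w : V | G.dist u w < G.dist v w}.ncard

/-- distance from an edge (unordered pair) to a vertex -/
def eDist (G : SimpleGraph V) (e : Sym2 V) (w : V) : ℕ :=
  Sym2.lift ⟨fun x y => min (G.dist x w) (G.dist y w), fun x y => min_comm _ _⟩ e

/-- number of edges strictly closer to `u` than to `v` -/
def szM (G : SimpleGraph V) (u v : V) : ℕ :=
  {e : Sym2 V | e ∈ G.edgeSet ∧ eDist G e u < eDist G e v}.ncard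

/-- edge Szeged index -/
def szE [Fintype V] (G : SimpleGraph V) : ℕ :=
  ∑ e ∈ G.edgeFinset,
    Sym2.lift ⟨fun u v => szM G u v * szM G v u, fun u v => mul_comm _ _⟩ e

/-- edge-vertex Szeged index -/
def szEV [Fintype V] (G : SimpleGraph V) : ℚ :=
  (1/2) * ∑ e ∈ G.edgeFinset,
    Sym2.lift ⟨fun u v => ((szN G u v * szM G v u + szN G v u * szM G u v : ℕ) : ℚ),
      fun u v => by push_cast; ring⟩ e

/-- the graph obtained from `H₀` and `H₁` by identifying the vertex `u₀` of `H₀`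
with the vertex `u₁` of `H₁` into a single common vertex (represented by
`Sum.inl u₀`) -/
def glue {V₀ V₁ : Type*} (H₀ : SimpleGraph V₀) (H₁ : SimpleGraph V₁)
    (u₀ : V₀) (u₁ : V₁) : SimpleGraph (V₀ ⊕ {x : V₁ // x ≠ u₁}) where
  Adj a b :=
    match a, b with
    | Sum.inl x, Sum.inl y => H₀.Adj x y
    | Sum.inl x, Sum.inr y => x = u₀ ∧ H₁.Adj u₁ y.1
    | Sum.inr x, Sum.inl y => y = u₀ ∧ H₁.Adj u₁ x.1
    | Sum.inr x, Sum.inr y => H₁.Adj x.1 y.1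
  symm := by
    refine ⟨?_⟩
    rintro (x | x) (y | y) h
    · exact h.symm
    · exact h
    · exact h
    · exact h.symm
  loopless := by
    refine ⟨?_⟩
    rintro (x | x) h
    · exact H₀.irrefl h
    · exact H₁.irrefl h

/-!
Sending `Sum.inl a ↦ (a, u₁)` and the `H₁`-side vertex `z ↦ (u₀, z)` is a graph homomorphism
from the glued graph into the box product `H₀ □ H₁`, so distances in the glued graph are at least
those in `H₀ □ H₁`; the inclusions of `H₀` and `H₁` give the reverse bound. Hence, seen from a
vertex `a` of `H₀`, a vertex `z` of `H₁` lies at distance `d(a, u₀) + d(u₁, z)`. For an edge `xy`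
of `H₀`, every vertex and every edge of `H₁` is therefore closer to `x` than to `y` exactly when
`u₀` is, so `n_x` and `m_x` in the glued graph are those of `H₀` plus `|V(H₁)| - 1` and `|E(H₁)|`,
or plus nothing. Both sums thus depend on `H₁` only through `|V(H₁)|` and `|E(H₁)|`.
-/

namespace SimpleGraph

variable {W : Type*} {G : SimpleGraph V} {G' : SimpleGraph W}

lemma Hom.dist_map_le (f : G →g G') {u v : V} (h : G.Reachable u v) :
    G'.dist (f u) (f v) ≤ G.dist u v := by
  obtain ⟨p, hp⟩ := h.exists_walk_length_eq_dist
  calc G'.dist (f u) (f v) ≤ (p.map f).length := dist_le _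
    _ = G.dist u v := by rw [Walk.length_map, hp]

lemma Connected.dist_boxProd (hG : G.Connected) (hG' : G'.Connected) (x y : V × W) :
    (G □ G').dist x y = G.dist x.1 y.1 + G'.dist x.2 y.2 := by
  rw [dist, edist_boxProd]
  exact ENat.toNat_add (edist_ne_top_iff_reachable.2 (hG _ _))
    (edist_ne_top_iff_reachable.2 (hG' _ _))

end SimpleGraph

lemma Set.ncard_sep_union_image {α β γ : Type*} [Finite γ] {f : α → γ} {g : β → γ}
    (hf : f.Injective) (hg : g.Injective) {s : Set α} {t : Set β}
    (hst : ∀ a ∈ s, ∀ b ∈ t, f a ≠ g b) (p : γ → Prop) :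
    {c | c ∈ f '' s ∪ g '' t ∧ p c}.ncard =
      {a | a ∈ s ∧ p (f a)}.ncard + {b | b ∈ t ∧ p (g b)}.ncard := by
  have hsplit : {c | c ∈ f '' s ∪ g '' t ∧ p c} =
      f '' {a | a ∈ s ∧ p (f a)} ∪ g '' {b | b ∈ t ∧ p (g b)} := by
    ext c
    simp only [Set.mem_ofPred_eq, Set.mem_union, Set.mem_image]
    aesop
  have hdisj : Disjoint (f '' {a | a ∈ s ∧ p (f a)}) (g '' {b | b ∈ t ∧ p (g b)}) := by
    rw [Set.disjoint_left]
    rintro _ ⟨a, ⟨ha, -⟩, rfl⟩ ⟨b, ⟨hb, -⟩, hba⟩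
    exact hst a ha b hb hba.symm
  rw [hsplit, Set.ncard_union_eq hdisj, Set.ncard_image_of_injective _ hf,
    Set.ncard_image_of_injective _ hg]

section Glue

variable {V₀ V₁ : Type*}

def glueRight (u₀ : V₀) (u₁ : V₁) (z : V₁) : V₀ ⊕ {x : V₁ // x ≠ u₁} :=
  if h : z = u₁ then Sum.inl u₀ else Sum.inr ⟨z, h⟩

variable (H₀ : SimpleGraph V₀) (H₁ : SimpleGraph V₁) (u₀ : V₀) (u₁ : V₁)

def glueHomLeft : H₀ →g glue H₀ H₁ u₀ u₁ := ⟨Sum.inl, id⟩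

def glueHomRight : H₁ →g glue H₀ H₁ u₀ u₁ where
  toFun := glueRight u₀ u₁
  map_rel' {a b} h := by
    unfold glueRight
    split_ifs with ha hb hb
    · exact absurd (ha ▸ hb ▸ h) H₁.irrefl
    · exact ⟨rfl, ha ▸ h⟩
    · exact ⟨rfl, hb ▸ h.symm⟩
    · exact h

def glueHomBoxProd : glue H₀ H₁ u₀ u₁ →g H₀ □ H₁ where
  toFun := Sum.elim (fun a => (a, u₁)) (fun z => (u₀, z.1))
  map_rel' {s t} h := by
    cases s <;> cases t
    · exact Or.inl ⟨h, rfl⟩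
    · exact Or.inr ⟨h.2, h.1⟩
    · exact Or.inr ⟨h.2.symm, h.1.symm⟩
    · exact Or.inr ⟨h, rfl⟩

variable {H₀ H₁ u₀ u₁}

@[simp]
lemma glueRight_self : glueRight u₀ u₁ u₁ = Sum.inl u₀ := dif_pos rfl

@[simp]
lemma glueRight_coe (z : {x : V₁ // x ≠ u₁}) : glueRight u₀ u₁ z = Sum.inr z := dif_neg z.2

lemma eq_of_glueRight_eq_inl {z : V₁} {a : V₀} (h : glueRight u₀ u₁ z = Sum.inl a) : z = u₁ := by
  by_contra hz
  rw [glueRight, dif_neg hz] at h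
  exact Sum.inr_ne_inl h

lemma glueRight_injective : (glueRight u₀ u₁).Injective := by
  intro a b h
  unfold glueRight at h
  split_ifs at h with ha hb hb <;> simp_all

@[simp]
lemma glueHomRight_apply (z : V₁) : glueHomRight H₀ H₁ u₀ u₁ z = glueRight u₀ u₁ z := rfl

@[simp]
lemma glueHomBoxProd_inl (a : V₀) : glueHomBoxProd H₀ H₁ u₀ u₁ (Sum.inl a) = (a, u₁) := rfl

@[simp]
lemma glueHomBoxProd_glueRight (z : V₁) :
    glueHomBoxProd H₀ H₁ u₀ u₁ (glueRight u₀ u₁ z) = (u₀, z) := by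
  unfold glueRight
  split_ifs with h
  · rw [h]; rfl
  · rfl

lemma glue_connected (h₀ : H₀.Connected) (h₁ : H₁.Connected) :
    (glue H₀ H₁ u₀ u₁).Connected := by
  refine (connected_iff_exists_forall_reachable _).2 ⟨Sum.inl u₀, ?_⟩
  rintro (a | z)
  · exact (h₀ u₀ a).map (glueHomLeft H₀ H₁ u₀ u₁)
  · simpa using (h₁ u₁ z.1).map (glueHomRight H₀ H₁ u₀ u₁)

lemma glue_edgeSet : (glue H₀ H₁ u₀ u₁).edgeSet =
    Sym2.map Sum.inl '' H₀.edgeSet ∪ Sym2.map (glueRight u₀ u₁) '' H₁.edgeSet := by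
  refine subset_antisymm ?_ (Set.union_subset ?_ ?_)
  · intro e he
    induction e using Sym2.ind with | _ s t =>
    rcases s with a | z <;> rcases t with b | w
    · exact Or.inl ⟨s(a, b), he, rfl⟩
    · obtain ⟨rfl, h⟩ := he
      exact Or.inr ⟨s(u₁, w), h, by simp⟩
    · obtain ⟨rfl, h⟩ := he
      exact Or.inr ⟨s(z, u₁), h.symm, by simp⟩
    · exact Or.inr ⟨s(z, w), he, by simp⟩
  · rintro _ ⟨f, hf, rfl⟩
    exact (glueHomLeft H₀ H₁ u₀ u₁).map_mem_edgeSet hf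
  · rintro _ ⟨f, hf, rfl⟩
    exact (glueHomRight H₀ H₁ u₀ u₁).map_mem_edgeSet hf

lemma map_inl_ne_map_glueRight (e : Sym2 V₀) {f : Sym2 V₁} (hf : f ∈ H₁.edgeSet) :
    Sym2.map Sum.inl e ≠ Sym2.map (glueRight u₀ u₁) f := by
  induction e using Sym2.ind with | _ a b =>
  induction f using Sym2.ind with | _ z w =>
  have hzw : z ≠ w := H₁.ne_of_adj hf
  rw [Sym2.map_mk, Sym2.map_mk, Ne, Sym2.eq_iff]
  rintro (⟨hz, hw⟩ | ⟨hz, hw⟩) <;>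
    exact hzw (by rw [eq_of_glueRight_eq_inl hz.symm, eq_of_glueRight_eq_inl hw.symm])

variable (h₀ : H₀.Connected) (h₁ : H₁.Connected)
include h₀ h₁

lemma glue_dist_inl_inl (a b : V₀) :
    (glue H₀ H₁ u₀ u₁).dist (Sum.inl a) (Sum.inl b) = H₀.dist a b := by
  refine le_antisymm ((glueHomLeft H₀ H₁ u₀ u₁).dist_map_le (h₀ a b)) ?_
  simpa [h₀.dist_boxProd h₁] using
    (glueHomBoxProd H₀ H₁ u₀ u₁).dist_map_le (glue_connected h₀ h₁ (.inl a) (.inl b))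

lemma glue_dist_inl_glueRight (a : V₀) (z : V₁) :
    (glue H₀ H₁ u₀ u₁).dist (Sum.inl a) (glueRight u₀ u₁ z) = H₀.dist a u₀ + H₁.dist u₁ z := by
  refine le_antisymm ?_ ?_
  · calc _ ≤ (glue H₀ H₁ u₀ u₁).dist (Sum.inl a) (Sum.inl u₀) +
          (glue H₀ H₁ u₀ u₁).dist (glueRight u₀ u₁ u₁) (glueRight u₀ u₁ z) := by
          rw [glueRight_self]; exact (glue_connected h₀ h₁).dist_triangle
      _ ≤ _ := add_le_add ((glueHomLeft H₀ H₁ u₀ u₁).dist_map_le (h₀ a u₀))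
          ((glueHomRight H₀ H₁ u₀ u₁).dist_map_le (h₁ u₁ z))
  · simpa [h₀.dist_boxProd h₁] using
      (glueHomBoxProd H₀ H₁ u₀ u₁).dist_map_le (glue_connected h₀ h₁ (.inl a) (glueRight u₀ u₁ z))

lemma glue_eDist_map_inl (e : Sym2 V₀) (x : V₀) :
    eDist (glue H₀ H₁ u₀ u₁) (Sym2.map Sum.inl e) (Sum.inl x) = eDist H₀ e x := by
  induction e using Sym2.ind with | _ a b =>
  simp [eDist, glue_dist_inl_inl h₀ h₁]

lemma glue_eDist_map_glueRight (e : Sym2 V₁) (x : V₀) :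
    eDist (glue H₀ H₁ u₀ u₁) (Sym2.map (glueRight u₀ u₁) e) (Sum.inl x) =
      H₀.dist x u₀ + eDist H₁ e u₁ := by
  induction e using Sym2.ind with | _ z w =>
  simp only [eDist, Sym2.map_mk, Sym2.lift_mk]
  rw [dist_comm (u := glueRight u₀ u₁ z), dist_comm (u := glueRight u₀ u₁ w),
    glue_dist_inl_glueRight h₀ h₁, glue_dist_inl_glueRight h₀ h₁, H₁.dist_comm (u := z),
    H₁.dist_comm (u := w), min_add_add_left]

lemma szN_glue [Finite V₀] [Fintype V₁] (x y : V₀) :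
    szN (glue H₀ H₁ u₀ u₁) (Sum.inl x) (Sum.inl y) =
      szN H₀ x y + if H₀.dist x u₀ < H₀.dist y u₀ then Fintype.card V₁ - 1 else 0 := by
  rw [szN, ← Set.sep_univ, ← Set.range_inl_union_range_inr, ← Set.image_univ, ← Set.image_univ,
    Set.ncard_sep_union_image Sum.inl_injective Sum.inr_injective (fun _ _ _ _ => Sum.inl_ne_inr)]
  simp only [Set.mem_univ, true_and, glue_dist_inl_inl h₀ h₁, ← glueRight_coe (u₀ := u₀),
    glue_dist_inl_glueRight h₀ h₁, add_lt_add_iff_right]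
  congr 1
  split_ifs with hc <;> simp [hc, Set.ncard_univ, Fintype.card_subtype_compl]

lemma szM_glue [Finite V₀] [Fintype V₁] (x y : V₀) :
    szM (glue H₀ H₁ u₀ u₁) (Sum.inl x) (Sum.inl y) =
      szM H₀ x y + if H₀.dist x u₀ < H₀.dist y u₀ then #H₁.edgeFinset else 0 := by
  rw [szM, glue_edgeSet, Set.ncard_sep_union_image (Sym2.map.injective Sum.inl_injective)
    (Sym2.map.injective glueRight_injective) (fun e _ _ hf => map_inl_ne_map_glueRight e hf)]
  simp only [glue_eDist_map_inl h₀ h₁, glue_eDist_map_glueRight h₀ h₁, add_lt_add_iff_right]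
  congr 1
  split_ifs with hc
  · simp only [hc, and_true, Set.ofPred_mem_eq]
    rw [← coe_edgeFinset, Set.ncard_coe_finset]
  · simp [hc]

end Glue

theorem szeged_sums_glue_invariant_general {V₀ V₁ V₂ : Type*} [Fintype V₀] [Fintype V₁]
    [Fintype V₂] (H₀ : SimpleGraph V₀) (H₁ : SimpleGraph V₁) (H₂ : SimpleGraph V₂)
    (u₀ : V₀) (u₁ : V₁) (u₂ : V₂)
    (h₀ : H₀.Connected) (h₁ : H₁.Connected) (h₂ : H₂.Connected)
    (hV : Fintype.card V₁ = Fintype.card V₂)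
    (hE : H₁.edgeFinset.card = H₂.edgeFinset.card) :
    (∑ e ∈ H₀.edgeFinset,
        Sym2.lift ⟨fun x y => szM (glue H₀ H₁ u₀ u₁) (Sum.inl x) (Sum.inl y) *
            szM (glue H₀ H₁ u₀ u₁) (Sum.inl y) (Sum.inl x),
          fun x y => mul_comm _ _⟩ e =
      ∑ e ∈ H₀.edgeFinset,
        Sym2.lift ⟨fun x y => szM (glue H₀ H₂ u₀ u₂) (Sum.inl x) (Sum.inl y) *
            szM (glue H₀ H₂ u₀ u₂) (Sum.inl y) (Sum.inl x),
          fun x y => mul_comm _ _⟩ e) ∧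
    (∑ e ∈ H₀.edgeFinset,
        Sym2.lift ⟨fun x y => szN (glue H₀ H₁ u₀ u₁) (Sum.inl x) (Sum.inl y) *
            szM (glue H₀ H₁ u₀ u₁) (Sum.inl y) (Sum.inl x) +
            szN (glue H₀ H₁ u₀ u₁) (Sum.inl y) (Sum.inl x) *
            szM (glue H₀ H₁ u₀ u₁) (Sum.inl x) (Sum.inl y),
          fun x y => add_comm _ _⟩ e =
      ∑ e ∈ H₀.edgeFinset,
        Sym2.lift ⟨fun x y => szN (glue H₀ H₂ u₀ u₂) (Sum.inl x) (Sum.inl y) *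
            szM (glue H₀ H₂ u₀ u₂) (Sum.inl y) (Sum.inl x) +
            szN (glue H₀ H₂ u₀ u₂) (Sum.inl y) (Sum.inl x) *
            szM (glue H₀ H₂ u₀ u₂) (Sum.inl x) (Sum.inl y),
          fun x y => add_comm _ _⟩ e) := by
  constructor <;> refine Finset.sum_congr rfl fun e _ => ?_ <;>
    induction e using Sym2.ind with
    | _ x y =>
      simp only [Sym2.lift_mk, szM_glue h₀ h₁, szM_glue h₀ h₂, szN_glue h₀ h₁, szN_glue h₀ h₂,
        hE, hV]

/-- Let `G` (resp. `G'`) be the connected graph obtained from connected graphs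
`G₀`, `G₁` (resp. `G₀`, `G₂`) by identifying a vertex of `G₀` with a vertex of
`G₁` (resp. of `G₂`) into a common vertex `u`. If `|V(G₁)| = |V(G₂)|` and
`|E(G₁)| = |E(G₂)|`, then
`Σ_{e=w₁w₂ ∈ E(G₀)} m_{w₁}(e|G)·m_{w₂}(e|G) = Σ_{e=w₁w₂ ∈ E(G₀)} m_{w₁}(e|G')·m_{w₂}(e|G')`
and
`Σ_{e=w₁w₂ ∈ E(G₀)} [n_{w₁}(e|G)·m_{w₂}(e|G) + n_{w₂}(e|G)·m_{w₁}(e|G)]`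
`= Σ_{e=w₁w₂ ∈ E(G₀)} [n_{w₁}(e|G')·m_{w₂}(e|G') + n_{w₂}(e|G')·m_{w₁}(e|G')]`. -/
theorem szeged_sums_glue_invariant {V₀ V₁ V₂ : Type*} [Fintype V₀] [Fintype V₁]
    [Fintype V₂] (H₀ : SimpleGraph V₀) (H₁ : SimpleGraph V₁) (H₂ : SimpleGraph V₂)
    (u₀ : V₀) (u₁ : V₁) (u₂ : V₂)
    (h₀ : H₀.Connected) (h₁ : H₁.Connected) (h₂ : H₂.Connected)
    (hG : (glue H₀ H₁ u₀ u₁).Connected) (hG' : (glue H₀ H₂ u₀ u₂).Connected)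
    (hV : Fintype.card V₁ = Fintype.card V₂)
    (hE : H₁.edgeFinset.card = H₂.edgeFinset.card) :
    (∑ e ∈ H₀.edgeFinset,
        Sym2.lift ⟨fun x y => szM (glue H₀ H₁ u₀ u₁) (Sum.inl x) (Sum.inl y) *
            szM (glue H₀ H₁ u₀ u₁) (Sum.inl y) (Sum.inl x),
          fun x y => mul_comm _ _⟩ e =
      ∑ e ∈ H₀.edgeFinset,
        Sym2.lift ⟨fun x y => szM (glue H₀ H₂ u₀ u₂) (Sum.inl x) (Sum.inl y) *
            szM (glue H₀ H₂ u₀ u₂) (Sum.inl y) (Sum.inl x),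
          fun x y => mul_comm _ _⟩ e) ∧
    (∑ e ∈ H₀.edgeFinset,
        Sym2.lift ⟨fun x y => szN (glue H₀ H₁ u₀ u₁) (Sum.inl x) (Sum.inl y) *
            szM (glue H₀ H₁ u₀ u₁) (Sum.inl y) (Sum.inl x) +
            szN (glue H₀ H₁ u₀ u₁) (Sum.inl y) (Sum.inl x) *
            szM (glue H₀ H₁ u₀ u₁) (Sum.inl x) (Sum.inl y),
          fun x y => add_comm _ _⟩ e =
      ∑ e ∈ H₀.edgeFinset,
        Sym2.lift ⟨fun x y => szN (glue H₀ H₂ u₀ u₂) (Sum.inl x) (Sum.inl y) *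
            szM (glue H₀ H₂ u₀ u₂) (Sum.inl y) (Sum.inl x) +
            szN (glue H₀ H₂ u₀ u₂) (Sum.inl y) (Sum.inl x) *
            szM (glue H₀ H₂ u₀ u₂) (Sum.inl x) (Sum.inl y),
          fun x y => add_comm _ _⟩ e) :=
  szeged_sums_glue_invariant_general H₀ H₁ H₂ u₀ u₁ u₂ h₀ h₁ h₂ hV hE
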